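/- arXiv:2006.14968 — 3 statements merged into one kernel-verified Lean document; each statement's English description precedes it below -/
import Mathlib

section
/- Let A be a finite alphabet with |A| ≥ 2 and n ≥ 1. If S ⊆ nA^* is a finite maximal product code, then S can be reached from {(ε,...,ε)} by a finite sequence of one-step restrictions. -/
/-!
Write `S = ∏ Pᵢ`. Maximality of `S` forces every factor `Pᵢ` to be a maximal prefix code, and
`Pᵢ` is finite because `S` is. In a single coordinate, a finite maximal prefix code other than
`{ε}` contains all children `wa` of the parent `w` of a longest word; collapsing them to `w`
gives a smaller maximal prefix code from which one restriction leads back, so `{ε}` reaches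
`Pᵢ`. Such a chain lifts to `nA^*` by running it inside each line `{update u i y | y}` through
a point `u` of the current product with `uᵢ = ε`: distinct such lines are disjoint, so the
chains do not interfere. Doing this for one coordinate after another carries `{(ε,…,ε)}`
to `∏ Pᵢ`.
-/

/-- A prefix code: no element is a strict prefix of another. -/
def PrefixCode {A : Type*} (P : Set (List A)) : Prop :=
  ∀ p ∈ P, ∀ q ∈ P, p <+: q → p = q

/-- Two `n`-tuples of strings have a join iff they are coordinatewise prefix-comparable. -/
def HasJoin {A : Type*} {n : ℕ} (u v : Fin n → List A) : Prop :=
  ∀ i, u i <+: v i ∨ v i <+: u i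

/-- A joinless code in `nA^*`. -/
def JoinlessCode {A : Type*} {n : ℕ} (S : Set (Fin n → List A)) : Prop :=
  ∀ u ∈ S, ∀ v ∈ S, u ≠ v → ¬ HasJoin u v

/-- A maximal joinless code in `nA^*`. -/
def MaxJoinlessCode {A : Type*} {n : ℕ} (S : Set (Fin n → List A)) : Prop :=
  JoinlessCode S ∧ ∀ T : Set (Fin n → List A), JoinlessCode T → S ⊆ T → S = T

/-- A product code in `nA^*`: a cartesian product of `n` prefix codes. -/
def IsProductCode {A : Type*} {n : ℕ} (S : Set (Fin n → List A)) : Prop :=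
  ∃ P : Fin n → Set (List A), (∀ i, PrefixCode (P i)) ∧
    S = {u | ∀ i, u i ∈ P i}

/-- One-step restriction: `Q` is obtained from `P` by replacing some `p ∈ P` by the
set of all `(p_1,...,p_{i-1}, p_i a, p_{i+1},...,p_n)` for `a ∈ A`. -/
def RestrStep {A : Type*} {n : ℕ} (P Q : Set (Fin n → List A)) : Prop :=
  ∃ p ∈ P, ∃ i : Fin n,
    Q = (P \ {p}) ∪ {q | ∃ a : A, q = Function.update p i (p i ++ [a])}

/-- Reachability by a finite sequence of one-step restrictions. -/
def Reachable {A : Type*} {n : ℕ} (X Y : Set (Fin n → List A)) : Prop :=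
  Relation.ReflTransGen RestrStep X Y

open Function Set

def RestrStep₁ {A : Type*} (Q Q' : Set (List A)) : Prop :=
  ∃ q ∈ Q, Q' = (Q \ {q}) ∪ range fun a : A => q ++ [a]

section Words

variable {A : Type*} {P : Set (List A)} {w : List A}

def IsMaxPrefixCode (P : Set (List A)) : Prop :=
  PrefixCode P ∧ ∀ w, ∃ p ∈ P, p <+: w ∨ w <+: p

lemma PrefixCode.mem_range_of_prefix (hP : PrefixCode P) (hw : w ∉ P)
    (hchildren : ∀ a, w ++ [a] ∈ P) {x : List A} (hx : x ∈ P) (hwx : w <+: x) :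
    x ∈ range fun a => w ++ [a] := by
  obtain ⟨_ | ⟨a, t⟩, rfl⟩ := hwx
  · exact absurd (by simpa using hx) hw
  · exact ⟨a, hP _ (hchildren a) _ hx ⟨t, by simp⟩⟩

lemma IsMaxPrefixCode.exists_children_mem (hP : IsMaxPrefixCode P) (hfin : P.Finite)
    (hnil : [] ∉ P) : ∃ w ∉ P, ∀ a, w ++ [a] ∈ P := by
  obtain ⟨p, hp, -⟩ := hP.2 []
  obtain ⟨p₀, hp₀, hlongest⟩ := exists_max_image P List.length hfin ⟨p, hp⟩
  obtain ⟨w, a, rfl⟩ : ∃ w a, p₀ = w ++ [a] :=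
    (p₀.eq_nil_or_concat').resolve_left fun h => hnil (h ▸ hp₀)
  refine ⟨w, fun hw => by simpa using hP.1 _ hw _ hp₀ (w.prefix_append [a]), fun b => ?_⟩
  obtain ⟨q, hq, hq_prefix | hprefix_q⟩ := hP.2 (w ++ [b])
  · rcases List.prefix_concat_iff.1 hq_prefix with rfl | hqw
    · exact hq
    · obtain rfl := hP.1 _ hq _ hp₀ (hqw.trans (w.prefix_append [a]))
      simpa using hqw.length_le
  · rwa [hprefix_q.eq_of_length (hprefix_q.length_le.antisymm (by simpa using hlongest q hq))]

lemma IsMaxPrefixCode.insert_diff_range [Nonempty A] (hP : IsMaxPrefixCode P) (hw : w ∉ P)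
    (hchildren : ∀ a, w ++ [a] ∈ P) :
    IsMaxPrefixCode (insert w (P \ range fun a => w ++ [a])) := by
  refine ⟨?_, fun v => ?_⟩
  · rintro x (rfl | ⟨hx, hxw⟩) y (rfl | ⟨hy, hyw⟩) hxy
    · rfl
    · exact absurd (hP.1.mem_range_of_prefix hw hchildren hy hxy) hyw
    · obtain ⟨a⟩ := ‹Nonempty A›
      have := hP.1 _ hx _ (hchildren a) (hxy.trans (List.prefix_append _ [a]))
      exact (hxw ⟨a, this.symm⟩).elim
    · exact hP.1 _ hx _ hy hxy
  · obtain ⟨q, hq, hcomp⟩ := hP.2 v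
    by_cases hqw : q ∈ range fun a => w ++ [a]
    · obtain ⟨a, rfl⟩ := hqw
      refine ⟨w, mem_insert _ _, ?_⟩
      rcases hcomp with h | h
      · exact .inl ((w.prefix_append [a]).trans h)
      · rcases List.prefix_concat_iff.1 h with rfl | h
        · exact .inl (w.prefix_append [a])
        · exact .inr h
    · exact ⟨q, .inr ⟨hq, hqw⟩, hcomp⟩

lemma restrStep₁_insert_diff_range (hw : w ∉ P) (hchildren : ∀ a, w ++ [a] ∈ P) :
    RestrStep₁ (insert w (P \ range fun a => w ++ [a])) P := by
  refine ⟨w, mem_insert _ _, ?_⟩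
  rw [insert_sdiff_self_of_notMem fun h => hw h.1,
    sdiff_union_of_subset (range_subset_iff.2 hchildren)]

lemma ncard_insert_diff_range_lt (hA : 1 < Nat.card A) (hfin : P.Finite)
    (hchildren : ∀ a, w ++ [a] ∈ P) :
    (insert w (P \ range fun a => w ++ [a])).ncard < P.ncard := by
  have hsub : (range fun a => w ++ [a]) ⊆ P := range_subset_iff.2 hchildren
  have hcard : (range fun a => w ++ [a]).ncard = Nat.card A :=
    ncard_range_of_injective fun a b h => by simpa using h
  have := ncard_insert_le w (P \ range fun a => w ++ [a])
  have := ncard_le_ncard hsub hfin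
  rw [ncard_sdiff hsub (hfin.subset hsub)] at *
  omega

lemma IsMaxPrefixCode.reachable (hA : 1 < Nat.card A) (hP : IsMaxPrefixCode P)
    (hfin : P.Finite) : Relation.ReflTransGen RestrStep₁ {[]} P := by
  have : Nonempty A := (Nat.card_pos_iff.1 (by omega)).1
  induction hcard : P.ncard using Nat.strong_induction_on generalizing P with
  | _ N ih =>
    by_cases hnil : [] ∈ P
    · rw [eq_singleton_iff_unique_mem.2
        ⟨hnil, fun q hq => (hP.1 _ hnil _ hq q.nil_prefix).symm⟩]
    · obtain ⟨w, hw, hchildren⟩ := hP.exists_children_mem hfin hnil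
      exact (ih _ (hcard ▸ ncard_insert_diff_range_lt hA hfin hchildren)
        (hP.insert_diff_range hw hchildren) (hfin.sdiff.insert w) rfl).tail
        (restrStep₁_insert_diff_range hw hchildren)

end Words

section Lines

variable {A : Type*} {n : ℕ}

lemma disjoint_range_update_of_ne {u v : Fin n → List A} {i : Fin n} (hi : u i = v i)
    (huv : u ≠ v) : Disjoint (range (update u i)) (range (update v i)) := by
  rw [Set.disjoint_left]
  rintro _ ⟨y, rfl⟩ ⟨z, hzy⟩
  apply huv
  calc u = update (update u i y) i (u i) := by rw [update_idem, update_eq_self]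
    _ = update (update v i z) i (v i) := by rw [hzy, hi]
    _ = v := by rw [update_idem, update_eq_self]

lemma restrStep_union_image_update {i : Fin n} {u : Fin n → List A} {T : Set (Fin n → List A)}
    (hT : Disjoint T (range (update u i))) {Q Q' : Set (List A)} (h : RestrStep₁ Q Q') :
    RestrStep (T ∪ update u i '' Q) (T ∪ update u i '' Q') := by
  obtain ⟨q, hq, rfl⟩ := h
  refine ⟨update u i q, Or.inr (mem_image_of_mem _ hq), i, ?_⟩
  have hchildren : {x | ∃ a : A, x = update (update u i q) i (update u i q i ++ [a])} =
      update u i '' range fun a : A => q ++ [a] := by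
    ext x
    simp [eq_comm]
  have hqT : update u i q ∉ T := fun h => hT.notMem_of_mem_left h ⟨q, rfl⟩
  rw [hchildren, image_union, image_sdiff (update_injective u i), image_singleton,
    union_sdiff_distrib, sdiff_singleton_eq_self hqT, union_assoc]

lemma reachable_union_image_update {i : Fin n} {u : Fin n → List A} {T : Set (Fin n → List A)}
    (hT : Disjoint T (range (update u i))) {Q Q' : Set (List A)}
    (h : Relation.ReflTransGen RestrStep₁ Q Q') :
    Reachable (T ∪ update u i '' Q) (T ∪ update u i '' Q') :=
  h.lift (fun R => T ∪ update u i '' R) fun _ _ => restrStep_union_image_update hT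

lemma reachable_union_biUnion_image_update {i : Fin n} {Q Q' : Set (List A)}
    (h : Relation.ReflTransGen RestrStep₁ Q Q') (F : Finset (Fin n → List A))
    (hF : (F : Set (Fin n → List A)).PairwiseDisjoint fun u => range (update u i))
    (G : Set (Fin n → List A)) (hG : ∀ u ∈ F, Disjoint G (range (update u i))) :
    Reachable (G ∪ ⋃ u ∈ F, update u i '' Q) (G ∪ ⋃ u ∈ F, update u i '' Q') := by
  classical
  induction F using Finset.induction_on generalizing G with
  | empty =>
    simp only [Finset.notMem_empty, iUnion_of_empty, iUnion_empty, union_empty]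
    exact Relation.ReflTransGen.refl
  | insert u F hu ih =>
    rw [Finset.coe_insert, pairwiseDisjoint_insert_of_notMem hu] at hF
    have hsplit : ∀ R, G ∪ ⋃ v ∈ insert u F, update v i '' R =
        (G ∪ update u i '' R) ∪ ⋃ v ∈ F, update v i '' R := fun R => by
      rw [Finset.set_biUnion_insert, ← union_assoc]
    have hmove_u : Reachable ((G ∪ ⋃ v ∈ F, update v i '' Q) ∪ update u i '' Q)
        ((G ∪ ⋃ v ∈ F, update v i '' Q) ∪ update u i '' Q') := by
      refine reachable_union_image_update (disjoint_union_left.2 ⟨hG u (by simp), ?_⟩) h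
      exact disjoint_iUnion₂_left.2 fun v hv =>
        (hF.2 v hv).symm.mono_left (image_subset_range _ _)
    have hmove_F := ih hF.1 (G ∪ update u i '' Q') fun v hv =>
      disjoint_union_left.2
        ⟨hG v (by simp [hv]), (hF.2 v hv).mono_left (image_subset_range _ _)⟩
    rw [hsplit, hsplit]
    rw [union_right_comm G _ (update u i '' Q),
      union_right_comm G _ (update u i '' Q')] at hmove_u
    exact hmove_u.trans hmove_F

end Lines

section Products

variable {A : Type*} {n : ℕ}

lemma univ_pi_update_eq_biUnion (P : Fin n → Set (List A)) (i : Fin n) (R : Set (List A)) :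
    univ.pi (update P i R) = ⋃ u ∈ univ.pi (update P i {[]}), update u i '' R := by
  ext v
  simp only [mem_univ_pi, mem_iUnion, mem_image, exists_prop]
  constructor
  · intro hv
    refine ⟨update v i [], fun j => ?_, v i, by simpa using hv i, by simp⟩
    rcases eq_or_ne j i with rfl | hj
    · simp
    · simpa [hj] using hv j
  · rintro ⟨u, hu, y, hy, rfl⟩ j
    rcases eq_or_ne j i with rfl | hj
    · simpa using hy
    · simpa [hj] using hu j

lemma reachable_univ_pi_update {i : Fin n} {Q Q' : Set (List A)}
    (h : Relation.ReflTransGen RestrStep₁ Q Q') (P : Fin n → Set (List A))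
    (hP : ∀ j ≠ i, (P j).Finite) :
    Reachable (univ.pi (update P i Q)) (univ.pi (update P i Q')) := by
  have hbase : (univ.pi (update P i {[]})).Finite := Finite.pi fun j => by
    rcases eq_or_ne j i with rfl | hj
    · simp
    · simpa [hj] using hP j hj
  have hF : (hbase.toFinset : Set (Fin n → List A)).PairwiseDisjoint
      fun u => range (update u i) := by
    intro u hu v hv huv
    simp only [Finite.coe_toFinset, mem_univ_pi] at hu hv
    have hui : u i = [] := by simpa using hu i
    have hvi : v i = [] := by simpa using hv i
    exact disjoint_range_update_of_ne (hui.trans hvi.symm) huv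
  have := reachable_union_biUnion_image_update h hbase.toFinset hF ∅ (by simp)
  simp only [empty_union, Finite.mem_toFinset] at this
  rwa [univ_pi_update_eq_biUnion P i Q, univ_pi_update_eq_biUnion P i Q']

lemma reachable_univ_pi {P : Fin n → Set (List A)} (hfin : ∀ i, (P i).Finite)
    (hP : ∀ i, Relation.ReflTransGen RestrStep₁ {[]} (P i)) :
    Reachable {fun _ => []} (univ.pi P) := by
  classical
  suffices ∀ s : Finset (Fin n),
      Reachable {fun _ => []} (univ.pi (s.piecewise P fun _ => {[]})) by
    simpa using this Finset.univ
  intro s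
  induction s using Finset.induction_on with
  | empty =>
    rw [Finset.piecewise_empty, univ_pi_singleton fun _ => []]
    exact Relation.ReflTransGen.refl
  | insert i s hi ih =>
    have hi' : s.piecewise P (fun _ => {[]}) = update (s.piecewise P fun _ => {[]}) i {[]} :=
      (update_eq_self_iff.2 (Finset.piecewise_eq_of_notMem _ _ _ hi).symm).symm
    rw [Finset.piecewise_insert]
    rw [hi'] at ih
    exact ih.trans (reachable_univ_pi_update (hP i) _ fun j _ => by
      by_cases hj : j ∈ s <;> simp [hj, hfin j])

end Products

section Codes

variable {A : Type*} {n : ℕ}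

lemma MaxJoinlessCode.nonempty {S : Set (Fin n → List A)} (hS : MaxJoinlessCode S) :
    S.Nonempty := by
  refine S.eq_empty_or_nonempty.resolve_left fun hempty => ?_
  have hsingleton : JoinlessCode ({fun _ => []} : Set (Fin n → List A)) :=
    fun u hu v hv huv => (huv (hu.trans hv.symm)).elim
  have := hS.2 _ hsingleton (hempty ▸ empty_subset _)
  exact (singleton_nonempty _).ne_empty (this.symm.trans hempty)

lemma JoinlessCode.insert {S : Set (Fin n → List A)} (hS : JoinlessCode S)
    {x : Fin n → List A} (hx : ∀ v ∈ S, ¬ HasJoin x v) : JoinlessCode (insert x S) := by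
  rintro u (rfl | hu) v (rfl | hv) huv hjoin
  · exact huv rfl
  · exact hx v hv hjoin
  · exact hx u hu fun i => (hjoin i).symm
  · exact hS u hu v hv huv hjoin

lemma isMaxPrefixCode_of_maxJoinlessCode_univ_pi {P : Fin n → Set (List A)}
    (hP : ∀ i, PrefixCode (P i)) (hmax : MaxJoinlessCode (univ.pi P)) (i : Fin n) :
    IsMaxPrefixCode (P i) := by
  refine ⟨hP i, fun w => ?_⟩
  by_contra! hw
  obtain ⟨u, -⟩ := hmax.nonempty
  have hjoinless : JoinlessCode (insert (update u i w) (univ.pi P)) :=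
    hmax.1.insert fun v hv hjoin => by
      obtain ⟨hv_prefix, hprefix_v⟩ := hw (v i) (hv i trivial)
      have hcomp := hjoin i
      rw [update_self] at hcomp
      exact hcomp.elim hprefix_v hv_prefix
  have hmem : update u i w ∈ univ.pi P :=
    (hmax.2 _ hjoinless (subset_insert _ _)).symm ▸ mem_insert _ _
  exact (hw w (by simpa using hmem i)).1 List.prefix_rfl

end Codes

theorem stmt_9_general {A : Type*} [Fintype A] (hA : 2 ≤ Fintype.card A)
    {n : ℕ} (S : Set (Fin n → List A))
    (hfin : S.Finite) (hprod : IsProductCode S) (hmax : MaxJoinlessCode S) :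
    Reachable {fun _ => ([] : List A)} S := by
  obtain ⟨P, hP, rfl⟩ := hprod
  have hpi : {u : Fin n → List A | ∀ i, u i ∈ P i} = univ.pi P := by ext; simp
  rw [hpi] at hfin hmax ⊢
  have hPfin : ∀ i, (P i).Finite := fun i => by
    simpa only [eval_image_univ_pi hmax.nonempty] using hfin.image (eval i)
  have hA' : 1 < Nat.card A := by rw [Nat.card_eq_fintype_card]; omega
  exact reachable_univ_pi hPfin fun i =>
    (isMaxPrefixCode_of_maxJoinlessCode_univ_pi hP hmax i).reachable hA' (hPfin i)

/-- Every finite maximal product code can be reached from the tuple of empty strings by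
a finite sequence of one-step restrictions. -/
theorem stmt_9 {A : Type*} [Fintype A] (hA : 2 ≤ Fintype.card A)
    {n : ℕ} (hn : 1 ≤ n) (S : Set (Fin n → List A))
    (hfin : S.Finite) (hprod : IsProductCode S) (hmax : MaxJoinlessCode S) :
    Reachable {fun _ => ([] : List A)} S :=
  stmt_9_general hA S hfin hprod hmax
end

section
/- Let A be a finite alphabet with |A| ≥ 2 and n ≥ 1. If Q ⊆ nA^* is a finite maximal product code and Q' is obtained from Q by a coordinatewise restriction, then Q' is a finite maximal product code. -/
/-- The coordinatewise restriction of `S` at the string `u` in coordinate `i`: every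
element `t` of `S` with `t i = u` is replaced by all its one-letter extensions in
coordinate `i`. -/
def CoordRestr {A : Type*} {n : ℕ} (S : Set (Fin n → List A)) (i : Fin n) (u : List A) :
    Set (Fin n → List A) :=
  {t ∈ S | t i ≠ u} ∪
    {q | ∃ t ∈ S, t i = u ∧ ∃ a : A, q = Function.update t i (u ++ [a])}

lemma hasJoin_symm' {A : Type*} {n : ℕ} {u v : Fin n → List A} (h : HasJoin u v) :
    HasJoin v u := fun i => (h i).symm

lemma hasJoin_refl' {A : Type*} {n : ℕ} (u : Fin n → List A) : HasJoin u u :=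
  fun _ => Or.inl (List.prefix_refl _)

lemma max_iff_complete' {A : Type*} {n : ℕ} {S : Set (Fin n → List A)}
    (hS : JoinlessCode S) :
    MaxJoinlessCode S ↔ ∀ w, ∃ s ∈ S, HasJoin s w := by
  constructor
  · rintro ⟨-, hmax⟩ w
    by_contra h
    push_neg at h
    have hjl : JoinlessCode (S ∪ {w}) := by
      rintro x (hx | rfl) y (hy | rfl) hxy
      · exact hS x hx y hy hxy
      · exact fun hj => h x hx hj
      · exact fun hj => h y hy (hasJoin_symm' hj)
      · exact absurd rfl hxy
    have := hmax _ hjl Set.subset_union_left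
    have hwS : w ∈ S := this ▸ Set.mem_union_right S rfl
    exact h w hwS (hasJoin_refl' w)
  · intro h
    refine ⟨hS, fun T hT hsub => Set.Subset.antisymm hsub fun w hwT => ?_⟩
    by_contra hwS
    obtain ⟨s, hsS, hj⟩ := h w
    exact hT s (hsub hsS) w hwT (fun he => hwS (he ▸ hsS)) hj

lemma product_joinless' {A : Type*} {n : ℕ} {P : Fin n → Set (List A)}
    (hP : ∀ i, PrefixCode (P i)) :
    JoinlessCode {t : Fin n → List A | ∀ i, t i ∈ P i} := by
  intro x hx y hy hxy hj
  apply hxy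
  funext j
  rcases hj j with h | h
  · exact hP j _ (hx j) _ (hy j) h
  · exact (hP j _ (hy j) _ (hx j) h).symm

/-- A coordinatewise restriction of a finite maximal product code is a finite maximal
product code. -/
theorem stmt_10 {A : Type*} [Fintype A] (hA : 2 ≤ Fintype.card A)
    {n : ℕ} (hn : 1 ≤ n) (Q : Set (Fin n → List A)) (hfin : Q.Finite)
    (hprod : IsProductCode Q) (hmax : MaxJoinlessCode Q)
    (i : Fin n) (u : List A) (hu : ∃ t ∈ Q, t i = u) :
    (CoordRestr Q i u).Finite ∧ IsProductCode (CoordRestr Q i u) ∧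
      MaxJoinlessCode (CoordRestr Q i u) := by
  haveI : Nonempty A := Fintype.card_pos_iff.mp (by omega)
  obtain ⟨P, hP, hQeq⟩ := hprod
  obtain ⟨t0, ht0Q, ht0i⟩ := hu
  have huPi : u ∈ P i := by
    have := hQeq ▸ ht0Q
    simpa [ht0i] using this i
  -- finiteness
  have hfin' : (CoordRestr Q i u).Finite := by
    apply Set.Finite.union
    · exact hfin.subset (Set.sep_subset _ _)
    · have : {q | ∃ t ∈ Q, t i = u ∧ ∃ a : A, q = Function.update t i (u ++ [a])} ⊆
          (fun p : (Fin n → List A) × A => Function.update p.1 i (u ++ [p.2])) ''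
            (Q ×ˢ (Set.univ : Set A)) := by
        rintro q ⟨t, htQ, -, a, rfl⟩
        exact ⟨(t, a), ⟨htQ, trivial⟩, rfl⟩
      exact ((hfin.prod Set.finite_univ).image _).subset this
  -- product structure
  set Pi' : Set (List A) := (P i \ {u}) ∪ {v | ∃ a : A, v = u ++ [a]} with hPi'
  set P' : Fin n → Set (List A) := Function.update P i Pi' with hP'
  have hPi'pref : PrefixCode Pi' := by
    rintro p (⟨hp, hpu⟩ | ⟨a, rfl⟩) q (⟨hq, hqu⟩ | ⟨b, rfl⟩) hpq
    · exact hP i p hp q hq hpq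
    · -- p ∈ P i \ {u}, q = u ++ [b]
      rcases Nat.lt_or_ge u.length p.length with hl | hl
      · have : p.length = (u ++ [b]).length := by
          have := hpq.length_le
          simp at this ⊢
          omega
        exact hpq.eq_of_length this
      · have hpu' : p <+: u :=
          List.prefix_of_prefix_length_le hpq (List.prefix_append u [b]) (by simpa using hl)
        exact absurd (hP i p hp u huPi hpu') hpu
    · -- p = u ++ [a], q ∈ P i \ {u}
      have hul : u <+: q := ((List.prefix_append u [a]).trans hpq)
      exact absurd (hP i u huPi q hq hul).symm hqu
    · exact hpq.eq_of_length (by simp)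
  have hP'pref : ∀ j, PrefixCode (P' j) := by
    intro j
    rcases eq_or_ne j i with rfl | hj
    · simpa [hP'] using hPi'pref
    · simpa [hP', Function.update_of_ne hj] using hP j
  have hQ'eq : CoordRestr Q i u = {t | ∀ j, t j ∈ P' j} := by
    ext q
    constructor
    · rintro (⟨hqQ, hqi⟩ | ⟨t, htQ, hti, a, rfl⟩)
      · intro j
        have hqj : q j ∈ P j := (hQeq ▸ hqQ) j
        rcases eq_or_ne j i with rfl | hj
        · simp only [hP', Function.update_self, hPi']
          exact Or.inl ⟨hqj, hqi⟩
        · simpa [hP', Function.update_of_ne hj] using hqj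
      · intro j
        have htj : ∀ k, t k ∈ P k := by rw [hQeq] at htQ; exact htQ
        rcases eq_or_ne j i with rfl | hj
        · simp only [Function.update_self, hP', hPi']
          exact Or.inr ⟨a, rfl⟩
        · simpa [hP', Function.update_of_ne hj] using htj j
    · intro hq
      have hqi : q i ∈ Pi' := by simpa [hP'] using hq i
      have hqj : ∀ j, j ≠ i → q j ∈ P j := fun j hj => by
        simpa [hP', Function.update_of_ne hj] using hq j
      rcases hqi with ⟨hqPi, hqu⟩ | ⟨a, ha⟩
      · left
        refine ⟨?_, hqu⟩
        rw [hQeq]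
        intro j
        rcases eq_or_ne j i with rfl | hj
        · exact hqPi
        · exact hqj j hj
      · right
        refine ⟨Function.update q i u, ?_, by simp, a, ?_⟩
        · rw [hQeq]
          intro j
          rcases eq_or_ne j i with rfl | hj
          · simpa using huPi
          · simpa [Function.update_of_ne hj] using hqj j hj
        · funext j
          rcases eq_or_ne j i with rfl | hj
          · simp [ha]
          · simp [Function.update_of_ne hj]
  have hjl' : JoinlessCode (CoordRestr Q i u) := by
    rw [hQ'eq]; exact product_joinless' hP'pref
  refine ⟨hfin', ⟨P', hP'pref, hQ'eq⟩, ?_⟩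
  rw [max_iff_complete' hjl']
  intro w
  obtain ⟨s, hsQ, hj⟩ := (max_iff_complete' hmax.1).mp hmax w
  rcases ne_or_eq (s i) u with hsi | hsi
  · exact ⟨s, Or.inl ⟨hsQ, hsi⟩, hj⟩
  · -- s i = u; w i comparable with u
    rcases hj i with hc | hc
    · -- u <+: w i
      rw [hsi] at hc
      rcases eq_or_ne (w i) u with hwi | hwi
      · -- w i = u : extend with arbitrary letter
        obtain ⟨a⟩ := ‹Nonempty A›
        refine ⟨Function.update s i (u ++ [a]), Or.inr ⟨s, hsQ, hsi, a, rfl⟩, ?_⟩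
        intro j
        rcases eq_or_ne j i with rfl | hj'
        · simp [hwi]
        · simpa [Function.update_of_ne hj'] using hj j
      · -- u strict prefix of w i
        obtain ⟨r, hr⟩ := hc
        have hrne : r ≠ [] := by rintro rfl; simp at hr; exact hwi hr.symm
        obtain ⟨a, r', rfl⟩ := List.exists_cons_of_ne_nil hrne
        refine ⟨Function.update s i (u ++ [a]), Or.inr ⟨s, hsQ, hsi, a, rfl⟩, ?_⟩
        intro j
        rcases eq_or_ne j i with rfl | hj'
        · left
          simp only [Function.update_self]
          rw [← hr]
          exact ⟨r', by simp⟩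
        · simpa [Function.update_of_ne hj'] using hj j
    · -- w i <+: u
      rw [hsi] at hc
      obtain ⟨a⟩ := ‹Nonempty A›
      refine ⟨Function.update s i (u ++ [a]), Or.inr ⟨s, hsQ, hsi, a, rfl⟩, ?_⟩
      intro j
      rcases eq_or_ne j i with rfl | hj'
      · right
        simp only [Function.update_self]
        exact hc.trans (List.prefix_append u [a])
      · simpa [Function.update_of_ne hj'] using hj j
end

section
/- Let n ≥ 1, k ≥ 3, identify A_2 = {a_0,a_1} ⊆ A_k = {a_0,...,a_{k−1}}, and let A_{[1,k[} = {a_1,...,a_{k−1}} and A_{[2,k[} = {a_2,...,a_{k−1}}. Let X_{i=1}^n P_i be a finite maximal product code in nA_2^* (each P_i a finite maximal prefix code of A_2^*). Then the set (nA_k ∖ nA_{[1,k[}) ∪ X_{i=1}^n ( a_1·P_i ∪ spref(a_1·P_i)·A_{[2,k[} ) is a finite maximal joinless code in nA_k^*, where nA_k ∖ nA_{[1,k[} is the set of n-tuples of single letters of A_k in which the letter a_0 occurs in at least one coordinate. -/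
/-- A maximal prefix code of the sub-free-monoid `L` (e.g. `A_2^* ⊆ A_k^*`). -/
def MaxPrefixCodeOn {A : Type*} (L P : Set (List A)) : Prop :=
  P ⊆ L ∧ PrefixCode P ∧ ∀ Q : Set (List A), Q ⊆ L → PrefixCode Q → P ⊆ Q → P = Q

/-- `A_2^*` viewed inside `A_k^*`: strings using only the letters `a_0, a_1`. -/
def Str2 (k : ℕ) : Set (List (Fin k)) :=
  {w | ∀ a ∈ w, (a : ℕ) < 2}

/-- The set of strict prefixes of elements of `P`. -/
def spref {A : Type*} (P : Set (List A)) : Set (List A) :=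
  {x | ∃ p ∈ P, x <+: p ∧ x ≠ p}

/-- `P ∪ spref(P)·A_{[2,k[}`. -/
def extd {k : ℕ} (P : Set (List (Fin k))) : Set (List (Fin k)) :=
  P ∪ {w | ∃ x ∈ spref P, ∃ b : Fin k, 2 ≤ (b : ℕ) ∧ w = x ++ [b]}

/-- `a_1·P = {a_1 p : p ∈ P}`. -/
def a1mul {k : ℕ} (hk : 3 ≤ k) (P : Set (List (Fin k))) : Set (List (Fin k)) :=
  (fun w => (⟨1, by omega⟩ : Fin k) :: w) '' P

/-- `nA_k ∖ nA_{[1,k[}`: the `n`-tuples of single letters of `A_k` in which the letter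
`a_0` occurs in at least one coordinate. -/
def lettersWithA0 {n k : ℕ} (hk : 3 ≤ k) : Set (Fin n → List (Fin k)) :=
  {u | (∀ i, ∃ a : Fin k, u i = [a]) ∧ ∃ i, u i = [(⟨0, by omega⟩ : Fin k)]}

-- completeness of a maximal prefix code
lemma max_complete {A : Type*} {L P : Set (List A)} (h : MaxPrefixCodeOn L P)
    {w : List A} (hw : w ∈ L) : ∃ p ∈ P, p <+: w ∨ w <+: p := by
  by_contra hc
  push_neg at hc
  have hQpc : PrefixCode (P ∪ {w}) := by
    rintro p (hp | rfl) q (hq | rfl) hpq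
    · exact h.2.1 p hp q hq hpq
    · exact absurd hpq (hc p hp).1
    · exact absurd hpq (hc q hq).2
    · rfl
  have hQL : P ∪ {w} ⊆ L := by
    rintro x (hx | rfl)
    · exact h.1 hx
    · exact hw
  have := h.2.2 (P ∪ {w}) hQL hQpc Set.subset_union_left
  have hwP : w ∈ P := this ▸ Set.mem_union_right _ rfl
  exact (hc w hwP).1 List.prefix_rfl

lemma extd_prefixcode' {k : ℕ} {P' : Set (List (Fin k))} (h2 : P' ⊆ Str2 k)
    (hpc : PrefixCode P') : PrefixCode (extd P') := by
  rintro p (hp | ⟨x, ⟨r, hr, hxr, hxne⟩, c, hc, rfl⟩) q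
      (hq | ⟨y, ⟨s, hs, hys, hyne⟩, d, hd, rfl⟩) hpq
  · exact hpc p hp q hq hpq
  · -- p ∈ P', q = y ++ [d]
    exfalso
    have hlen : p.length ≤ y.length := by
      rcases Nat.lt_or_ge p.length (y ++ [d]).length with h | h
      · simp at h; omega
      · have := hpq.eq_of_length (le_antisymm hpq.length_le h)
        subst this
        have : (d : ℕ) < 2 := h2 hp d (by simp)
        omega
    have hpy : p <+: y := List.prefix_of_prefix_length_le hpq (by simp) hlen
    have hps : p <+: s := hpy.trans hys
    have hpe := hpc p hp s hs hps
    subst hpe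
    exact hyne (hys.eq_of_length (le_antisymm hys.length_le hpy.length_le))
  · -- p = x ++ [c], q ∈ P'
    exfalso
    have : (c : ℕ) < 2 := h2 hq c (hpq.subset (by simp))
    omega
  · -- both appended
    rcases Nat.lt_or_ge (x ++ [c]).length (y ++ [d]).length with h | h
    · exfalso
      have hlen : (x ++ [c]).length ≤ y.length := by simp at h ⊢; omega
      have hxy : x ++ [c] <+: y := List.prefix_of_prefix_length_le hpq (by simp) hlen
      have : (c : ℕ) < 2 := h2 hs c (hys.subset (hxy.subset (by simp)))
      omega
    · exact hpq.eq_of_length (le_antisymm hpq.length_le h)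

lemma singleton_prefix_singleton {A : Type*} {a b : A} (h : [a] <+: [b]) : a = b := by
  have := h.eq_of_length (by simp)
  simpa using this

lemma split2 {k : ℕ} (w : List (Fin k)) :
    ∃ z rest, w = z ++ rest ∧ (∀ a ∈ z, (a : ℕ) < 2) ∧
      (rest = [] ∨ ∃ c rest', rest = c :: rest' ∧ 2 ≤ (c : ℕ)) := by
  induction w with
  | nil => exact ⟨[], [], rfl, by simp, Or.inl rfl⟩
  | cons a t ih =>
    by_cases ha : (a : ℕ) < 2
    · obtain ⟨z, rest, h1, h2, h3⟩ := ih
      refine ⟨a :: z, rest, by simp [h1], ?_, h3⟩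
      intro x hx
      rcases List.mem_cons.mp hx with rfl | hx
      · exact ha
      · exact h2 x hx
    · exact ⟨[], a :: t, rfl, by simp, Or.inr ⟨a, t, rfl, by omega⟩⟩

-- elements of extd (a1mul P) are nonempty with nonzero head
lemma extd_head {k : ℕ} (hk : 3 ≤ k) {P : Set (List (Fin k))}
    {w : List (Fin k)} (hw : w ∈ extd (a1mul hk P)) :
    ∃ a t, w = a :: t ∧ (a : ℕ) ≠ 0 := by
  rcases hw with ⟨p, hp, rfl⟩ | ⟨x, ⟨q, ⟨p, hp, rfl⟩, hxq, hxne⟩, c, hc, rfl⟩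
  · exact ⟨_, p, rfl, by simp⟩
  · cases x with
    | nil => exact ⟨c, [], rfl, by omega⟩
    | cons a t =>
      obtain ⟨ha, -⟩ := List.cons_prefix_cons.mp hxq
      exact ⟨a, t ++ [c], rfl, by simp [ha]⟩

lemma extd_complete {k : ℕ} (hk : 3 ≤ k) {P : Set (List (Fin k))}
    (hP : MaxPrefixCodeOn (Str2 k) P) {w : List (Fin k)}
    {a : Fin k} {t : List (Fin k)} (hw : w = a :: t) (ha : (a : ℕ) ≠ 0) :
    ∃ q ∈ extd (a1mul hk P), q <+: w ∨ w <+: q := by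
  subst hw
  obtain ⟨p₀, hp₀⟩ : P.Nonempty := by
    obtain ⟨p, hp, -⟩ := max_complete hP (w := []) (by intro x hx; simp at hx)
    exact ⟨p, hp⟩
  by_cases ha2 : 2 ≤ (a : ℕ)
  · refine ⟨[a], Or.inr ⟨[], ⟨_, ⟨p₀, hp₀, rfl⟩, List.nil_prefix, by simp⟩, a, ha2, rfl⟩, ?_⟩
    exact Or.inl ⟨t, rfl⟩
  · -- a = 1
    set a₁ : Fin k := ⟨1, by omega⟩ with ha₁def
    have ha1 : a = a₁ := by
      apply Fin.ext; simp [ha₁def]; omega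
    rw [ha1]
    obtain ⟨z, rest, rfl, hz, hrest⟩ := split2 t
    obtain ⟨p, hp, hcomp⟩ := max_complete hP (w := z) hz
    by_cases hpz : p <+: z
    · refine ⟨a₁ :: p, Or.inl ⟨p, hp, rfl⟩, Or.inl ?_⟩
      exact List.cons_prefix_cons.mpr ⟨rfl, hpz.trans (z.prefix_append rest)⟩
    · have hzp : z <+: p := hcomp.resolve_left hpz
      have hzne : z ≠ p := fun h => hpz (h ▸ List.prefix_rfl)
      rcases hrest with rfl | ⟨c, rest', rfl, hc⟩
      · refine ⟨a₁ :: p, Or.inl ⟨p, hp, rfl⟩, Or.inr ?_⟩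
        simp only [List.append_nil]
        exact List.cons_prefix_cons.mpr ⟨rfl, hzp⟩
      · refine ⟨(a₁ :: z) ++ [c],
          Or.inr ⟨a₁ :: z, ⟨a₁ :: p, ⟨p, hp, rfl⟩,
            List.cons_prefix_cons.mpr ⟨rfl, hzp⟩, by simp [hzne]⟩, c, hc, rfl⟩,
          Or.inl ⟨rest', by simp⟩⟩

/-- If `X_i P_i` is a finite maximal product code in `n(A_2)^*` (each `P_i` a finite
maximal prefix code of `A_2^*`), then
`(nA_k ∖ nA_{[1,k[}) ∪ X_i (a_1·P_i ∪ spref(a_1·P_i)·A_{[2,k[})` is a finite maximal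
joinless code in `n(A_k)^*`. -/
theorem stmt_17 {n k : ℕ} (hn : 1 ≤ n) (hk : 3 ≤ k)
    (P : Fin n → Set (List (Fin k)))
    (hfin : ∀ i, (P i).Finite)
    (hP : ∀ i, MaxPrefixCodeOn (Str2 k) (P i)) :
    (lettersWithA0 (n := n) hk ∪
        {u : Fin n → List (Fin k) | ∀ i, u i ∈ extd (a1mul hk (P i))}).Finite ∧
    MaxJoinlessCode (lettersWithA0 (n := n) hk ∪
        {u : Fin n → List (Fin k) | ∀ i, u i ∈ extd (a1mul hk (P i))}) := by
  classical
  set L := lettersWithA0 (n := n) (k := k) hk with hLdef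
  set X := {u : Fin n → List (Fin k) | ∀ i, u i ∈ extd (a1mul hk (P i))} with hXdef
  have hQpc : ∀ i, PrefixCode (extd (a1mul hk (P i))) := by
    intro i
    apply extd_prefixcode'
    · rintro w ⟨p, hp, rfl⟩ a haw
      rcases List.mem_cons.mp haw with rfl | h
      · simp
      · exact (hP i).1 hp a h
    · rintro p ⟨p', hp', rfl⟩ q ⟨q', hq', rfl⟩ hpq
      obtain ⟨-, h⟩ := List.cons_prefix_cons.mp hpq
      rw [(hP i).2.1 p' hp' q' hq' h]
  have hfinQ : ∀ i, (extd (a1mul hk (P i))).Finite := by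
    intro i
    have h1 : (a1mul hk (P i)).Finite := (hfin i).image _
    have hs : (spref (a1mul hk (P i))).Finite := by
      refine Set.Finite.subset
        (Set.Finite.biUnion h1 (fun p _ => p.inits.toFinset.finite_toSet)) ?_
      rintro x ⟨p, hp, hxp, -⟩
      exact Set.mem_biUnion hp (by simp [List.mem_inits, hxp])
    refine Set.Finite.union h1 (Set.Finite.subset
      (Set.Finite.image2 (fun x (b : Fin k) => x ++ [b]) hs Set.finite_univ) ?_)
    rintro w ⟨x, hx, b, hb, rfl⟩
    exact Set.mem_image2_of_mem hx (Set.mem_univ b)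
  have hfinL : L.Finite := by
    have hsub : L ⊆ Set.pi Set.univ (fun _ : Fin n => Set.range (fun a : Fin k => [a])) := by
      rintro u ⟨h1, -⟩ i -
      obtain ⟨a, ha⟩ := h1 i
      exact ⟨a, ha.symm⟩
    exact Set.Finite.subset (Set.Finite.pi fun i => Set.finite_range _) hsub
  have hfinX : X.Finite := by
    have hsub : X ⊆ Set.pi Set.univ (fun i => extd (a1mul hk (P i))) :=
      fun u hu i _ => hu i
    exact Set.Finite.subset (Set.Finite.pi hfinQ) hsub
  have hLX : ∀ u ∈ L, ∀ v ∈ X, ¬ HasJoin u v := by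
    intro u hu v hv hj
    obtain ⟨i, hi⟩ := hu.2
    obtain ⟨a, t, hat, ha⟩ := extd_head hk (hv i)
    rcases hj i with h | h
    · rw [hi, hat] at h
      obtain ⟨h0, -⟩ := List.cons_prefix_cons.mp h
      exact ha (by rw [← h0])
    · rw [hi, hat] at h
      obtain ⟨h0, -⟩ := List.cons_prefix_cons.mp h
      exact ha (by rw [h0])
  have hjl : JoinlessCode (L ∪ X) := by
    rintro u (hu | hu) v (hv | hv) huv hj
    · apply huv; funext i
      obtain ⟨a, ha⟩ := hu.1 i
      obtain ⟨b, hb⟩ := hv.1 i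
      rcases hj i with h | h
      · rw [ha, hb] at h ⊢; rw [singleton_prefix_singleton h]
      · rw [ha, hb] at h ⊢; rw [singleton_prefix_singleton h]
    · exact hLX u hu v hv hj
    · exact hLX v hv u hu (fun i => (hj i).symm)
    · apply huv; funext i
      rcases hj i with h | h
      · exact hQpc i _ (hu i) _ (hv i) h
      · exact (hQpc i _ (hv i) _ (hu i) h).symm
  have hcomp : ∀ u : Fin n → List (Fin k), ∃ v ∈ L ∪ X, HasJoin u v := by
    intro u
    by_cases h0 : ∀ i, ∃ a t, u i = a :: t ∧ (a : ℕ) ≠ 0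
    · have hq : ∀ i, ∃ q ∈ extd (a1mul hk (P i)), q <+: u i ∨ u i <+: q := by
        intro i
        obtain ⟨a, t, hat, ha⟩ := h0 i
        exact extd_complete hk (hP i) hat ha
      choose q hq1 hq2 using hq
      exact ⟨q, Or.inr hq1, fun i => (hq2 i).symm⟩
    · push_neg at h0
      obtain ⟨i₀, hi₀⟩ := h0
      refine ⟨fun i => [(u i).headD ⟨0, by omega⟩], Or.inl ⟨fun i => ⟨_, rfl⟩, i₀, ?_⟩,
        fun i => ?_⟩
      · cases hui : u i₀ with
        | nil => simp [hui]
        | cons a s =>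
          have h0a : (a : ℕ) = 0 := hi₀ a s hui
          simp only [hui, List.headD_cons]
          exact congrArg (fun x => [x]) (Fin.ext (by simpa using h0a))
      · cases hui : u i with
        | nil =>
          simp only [hui]
          exact Or.inl (List.nil_prefix)
        | cons a s =>
          simp only [hui, List.headD_cons]
          exact Or.inr ⟨s, rfl⟩
  refine ⟨Set.Finite.union hfinL hfinX, hjl, fun T hT hST => ?_⟩
  refine Set.Subset.antisymm hST fun t ht => ?_
  by_contra hts
  obtain ⟨v, hvS, hjoin⟩ := hcomp t
  exact hT t ht v (hST hvS) (fun h => hts (h ▸ hvS)) hjoin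
end
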